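/- (Ginibre kernel comparison.) Let K_N(x,y) := π^{-1} e^{-(|x|²+|y|²)/2} ∑_{l=0}^{N-1} (x ȳ)^l / l! and K_∞(x,y) := π^{-1} e^{-|x|²/2 - |y|²/2 + x ȳ} for x, y ∈ ℂ. Then for every ε ∈ (0,1) there is a constant C such that for all N and all x, y with |x|, |y| ≤ √((1-ε)N), one has |K_N(x,y) - K_∞(x,y)| ≤ C exp(-ε² N / 2). -/

import Mathlib

noncomputable section

open scoped Real

/-- The finite-`N` Ginibre kernel `K_N(x,y) = π⁻¹ e^{-(|x|²+|y|²)/2} ∑_{l<N} (x ȳ)^l / l!`. -/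
def ginibreKernelN (N : ℕ) (x y : ℂ) : ℂ :=
  ((1 / Real.pi : ℝ) : ℂ) * Complex.exp (-((‖x‖ ^ 2 + ‖y‖ ^ 2) / 2 : ℝ)) *
    ∑ l ∈ Finset.range N, (x * (starRingEnd ℂ) y) ^ l / (l.factorial : ℂ)

/-- The limiting Ginibre kernel `K_∞(x,y) = π⁻¹ e^{-|x|²/2 - |y|²/2 + x ȳ}`. -/
def ginibreKernelInf (x y : ℂ) : ℂ :=
  ((1 / Real.pi : ℝ) : ℂ) *
    Complex.exp (((-‖x‖ ^ 2 / 2 - ‖y‖ ^ 2 / 2 : ℝ) : ℂ) +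
      x * (starRingEnd ℂ) y)

/-!
With `z = x ȳ` and `s = |x| |y| = |z|`, the difference of the kernels is
`π⁻¹ e^{-(|x|²+|y|²)/2}` times the tail `∑_{l ≥ N} z^l / l!` of the exponential series, and
`e^{-(|x|²+|y|²)/2} ≤ e^{-s}`. Comparing the tail termwise with that of `e^N` gives
`|tail| ≤ (s/N)^N e^N`, so the error is at most `π⁻¹ (t e^{1-t})^N` with `t = s/N ≤ 1 - ε`.
Finally `log t ≤ -(1-t) - (1-t)²/2` (the first two terms of the series of `-log (1 - u)`)
yields `t e^{1-t} ≤ e^{-(1-t)²/2} ≤ e^{-ε²/2}`.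
-/

open Finset

lemma log_one_sub_le_neg_sub_sq_div_two {u : ℝ} (h0 : 0 ≤ u) (h1 : u < 1) :
    Real.log (1 - u) ≤ -u - u ^ 2 / 2 := by
  have h := sum_le_hasSum (range 2) (fun i _ ↦ by positivity)
    (Real.hasSum_pow_div_log_of_abs_lt_one (by rwa [abs_of_nonneg h0]))
  norm_num [sum_range_succ] at h
  linarith

lemma mul_exp_one_sub_le {t : ℝ} (h0 : 0 ≤ t) (h1 : t ≤ 1) :
    t * Real.exp (1 - t) ≤ Real.exp (-(1 - t) ^ 2 / 2) := by
  obtain rfl | ht := h0.eq_or_lt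
  · simpa using (Real.exp_pos _).le
  have hlog := log_one_sub_le_neg_sub_sq_div_two (u := 1 - t) (by linarith) (by linarith)
  rw [sub_sub_cancel] at hlog
  calc t * Real.exp (1 - t) = Real.exp (Real.log t + (1 - t)) := by
        rw [Real.exp_add, Real.exp_log ht]
    _ ≤ Real.exp (-(1 - t) ^ 2 / 2) := by gcongr; linarith

lemma exp_neg_mul_div_pow_mul_exp_le {ε s : ℝ} {N : ℕ} (hε : 0 ≤ ε) (hs0 : 0 ≤ s)
    (hs : s ≤ (1 - ε) * N) :
    Real.exp (-s) * (s / N) ^ N * Real.exp N ≤ Real.exp (-ε ^ 2 * N / 2) := by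
  rcases N.eq_zero_or_pos with rfl | hN
  · simpa using hs0
  have hN' : (0 : ℝ) < N := by exact_mod_cast hN
  set t := s / N with ht
  have hst : s = t * N := by rw [ht, div_mul_cancel₀ _ hN'.ne']
  have ht1 : t ≤ 1 - ε := by rw [ht, div_le_iff₀ hN']; exact hs
  have hεt : ε ^ 2 ≤ (1 - t) ^ 2 := pow_le_pow_left₀ hε (by linarith) 2
  calc Real.exp (-s) * t ^ N * Real.exp N = (t * Real.exp (1 - t)) ^ N := by
        rw [mul_pow, ← Real.exp_nat_mul, hst, mul_right_comm, ← Real.exp_add]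
        ring_nf
    _ ≤ Real.exp (-(1 - t) ^ 2 / 2) ^ N :=
        pow_le_pow_left₀ (by positivity) (mul_exp_one_sub_le (by positivity) (by linarith)) N
    _ ≤ Real.exp (-ε ^ 2 / 2) ^ N := by gcongr
    _ = Real.exp (-ε ^ 2 * N / 2) := by rw [← Real.exp_nat_mul]; ring_nf

lemma norm_exp_sub_sum_range_le {z : ℂ} {r : ℝ} (hz : ‖z‖ ≤ r) (n : ℕ) :
    ‖Complex.exp z - ∑ m ∈ range n, z ^ m / m.factorial‖ ≤ (‖z‖ / r) ^ n * Real.exp r := by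
  have hr : 0 ≤ r := (norm_nonneg z).trans hz
  have hzTail := (hasSum_nat_add_iff' n).mpr (NormedSpace.expSeries_div_hasSum_exp z)
  have hrTail := ((hasSum_nat_add_iff' n).mpr (NormedSpace.expSeries_div_hasSum_exp r)).mul_left
    ((‖z‖ / r) ^ n)
  rw [← Complex.exp_eq_exp_ℂ] at hzTail
  rw [← Real.exp_eq_exp_ℝ] at hrTail
  refine (hzTail.norm_le_of_bounded hrTail fun k ↦ ?_).trans ?_
  · have hpow : ‖z‖ ^ (k + n) ≤ (‖z‖ / r) ^ n * r ^ (k + n) := by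
      rcases hr.eq_or_lt with rfl | hr
      · rw [le_antisymm hz (norm_nonneg z)]
        rcases n with _ | n <;> simp
      calc ‖z‖ ^ (k + n) = ‖z‖ ^ k * ‖z‖ ^ n := pow_add _ _ _
        _ ≤ r ^ k * ‖z‖ ^ n := by gcongr
        _ = (‖z‖ / r) ^ n * r ^ (k + n) := by rw [div_pow, pow_add]; field_simp
    rw [norm_div, norm_pow, Complex.norm_natCast, mul_div_assoc']
    gcongr
  · gcongr
    exact sub_le_self _ (sum_nonneg fun m _ ↦ by positivity)

lemma norm_ginibreKernelN_sub_ginibreKernelInf (N : ℕ) (x y : ℂ) :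
    ‖ginibreKernelN N x y - ginibreKernelInf x y‖ =
      π⁻¹ * Real.exp (-(‖x‖ ^ 2 + ‖y‖ ^ 2) / 2) *
        ‖Complex.exp (x * (starRingEnd ℂ) y) -
          ∑ l ∈ range N, (x * (starRingEnd ℂ) y) ^ l / l.factorial‖ := by
  have hsplit : ginibreKernelN N x y - ginibreKernelInf x y =
      ((1 / π : ℝ) : ℂ) * Complex.exp ((-(‖x‖ ^ 2 + ‖y‖ ^ 2) / 2 : ℝ) : ℂ) *
        -(Complex.exp (x * (starRingEnd ℂ) y) -
          ∑ l ∈ range N, (x * (starRingEnd ℂ) y) ^ l / l.factorial) := by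
    rw [ginibreKernelN, ginibreKernelInf, Complex.exp_add]
    push_cast
    ring_nf
  rw [hsplit, norm_mul, norm_mul, norm_neg, Complex.norm_real, Complex.norm_exp_ofReal,
    Real.norm_of_nonneg (by positivity), one_div]

/-- **Ginibre kernel comparison.** For every `ε ∈ (0,1)` there is a constant `C` such that
for all `N` and all `x, y` with `|x|, |y| ≤ √((1-ε)N)`,
`|K_N(x,y) - K_∞(x,y)| ≤ C exp(-ε² N / 2)`. -/
theorem stmt13 :
    ∀ ε : ℝ, ε ∈ Set.Ioo (0 : ℝ) 1 → ∃ C : ℝ, 0 < C ∧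
      ∀ (N : ℕ) (x y : ℂ),
        ‖x‖ ≤ Real.sqrt ((1 - ε) * N) →
        ‖y‖ ≤ Real.sqrt ((1 - ε) * N) →
        ‖ginibreKernelN N x y - ginibreKernelInf x y‖ ≤
          C * Real.exp (-(ε ^ 2) * N / 2) := by
  rintro ε ⟨hε0, hε1⟩
  refine ⟨π⁻¹, by positivity, fun N x y hx hy ↦ ?_⟩
  set s := ‖x‖ * ‖y‖
  have hs : s ≤ (1 - ε) * N :=
    calc s ≤ √((1 - ε) * N) * √((1 - ε) * N) :=
          mul_le_mul hx hy (norm_nonneg y) (by positivity)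
      _ = (1 - ε) * N := Real.mul_self_sqrt (mul_nonneg (by linarith) N.cast_nonneg)
  have hz : ‖x * (starRingEnd ℂ) y‖ = s := by simp [s]
  rw [norm_ginibreKernelN_sub_ginibreKernelInf]
  calc _ ≤ π⁻¹ * Real.exp (-s) * ((s / N) ^ N * Real.exp N) := by
        gcongr
        · nlinarith [two_mul_le_add_sq ‖x‖ ‖y‖]
        · rw [← hz]
          refine norm_exp_sub_sum_range_le ?_ N
          nlinarith [N.cast_nonneg (α := ℝ)]
    _ = π⁻¹ * (Real.exp (-s) * (s / N) ^ N * Real.exp N) := by ring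
    _ ≤ π⁻¹ * Real.exp (-(ε ^ 2) * N / 2) := by
        gcongr
        exact exp_neg_mul_div_pow_mul_exp_le hε0.le (by positivity) hs
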